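/- Let B be a k-algebra, C a k-coalgebra, and let P be an object of the category of left B-modules which are simultaneously right C-comodules with left B-linear coaction (morphisms being left B-linear right C-colinear maps). Then P is a C-equivariantly projective left B-module (i.e., for any two objects M, N, any morphisms π : M → N and f : P → N in this category, and any right C-colinear section i : N → M of π, there exists a morphism g : P → M in this category with π ∘ g = f) if and only if there exists a left B-linear right C-colinear section s : P → B ⊗ P of the multiplication map B ⊗ P → P, where B ⊗ P carries the right C-comodule structure id_B ⊗ Δ_P. -/
import Mathlib


/-!
STATEMENT 0. P in the category of left B-modules / right C-comodules with
B-linear coaction is C-equivariantly projective as a left B-module iff the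
multiplication map B ⊗ P → P has a left B-linear right C-colinear section.
-/

open TensorProduct LinearMap

set_option linter.unusedSectionVars false

noncomputable section

namespace CGal

universe u

variable {k : Type u} [Field k]
variable {B : Type u} [Ring B] [Algebra k B]
variable {C : Type u} [AddCommGroup C] [Module k C] [Coalgebra k C]

/-- Comodule axioms for a right `C`-coaction on a `k`-module `M`. -/
def IsCoactionOn (M : Type u) [AddCommGroup M] [Module k M]
    (ρ : M →ₗ[k] M ⊗[k] C) : Prop :=
  (∀ m : M, (TensorProduct.rid k M) ((lTensor M (Coalgebra.counit : C →ₗ[k] k)) (ρ m)) = m) ∧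
  (∀ m : M, (rTensor C ρ) (ρ m)
      = (TensorProduct.assoc k M C C).symm
          ((lTensor M (Coalgebra.comul : C →ₗ[k] C ⊗[k] C)) (ρ m)))

/-- Right `C`-colinearity of a `k`-linear map with respect to given coactions. -/
def IsColinear {M N : Type u} [AddCommGroup M] [Module k M] [AddCommGroup N] [Module k N]
    (ρM : M →ₗ[k] M ⊗[k] C) (ρN : N →ₗ[k] N ⊗[k] C) (f : M →ₗ[k] N) : Prop :=
  ∀ m : M, ρN (f m) = (rTensor C f) (ρM m)

section Aux

variable (P : Type u) [AddCommGroup P] [Module k P] [Module B P]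
    [IsScalarTower k B P] [SMulCommClass k B P]

/-- The multiplication (action) map `B ⊗ P → P`. -/
def muMap : B ⊗[k] P →ₗ[k] P :=
  TensorProduct.lift (LinearMap.mk₂ k (fun (b : B) (p : P) => b • p)
    (fun _ _ _ => add_smul _ _ _) (fun _ _ _ => smul_assoc _ _ _)
    (fun _ _ _ => smul_add _ _ _) (fun c b p => (smul_comm c b p).symm))

@[simp] lemma muMap_tmul (b : B) (p : P) : muMap P (b ⊗ₜ[k] p) = b • p := rfl

variable (ΔP : P →ₗ[k] P ⊗[k] C)

/-- The induced coaction on `B ⊗ P`. -/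
def rhoM : B ⊗[k] P →ₗ[k] (B ⊗[k] P) ⊗[k] C :=
  (TensorProduct.assoc k B P C).symm.toLinearMap ∘ₗ lTensor B ΔP

@[simp] lemma rhoM_tmul (b : B) (p : P) :
    rhoM P ΔP (b ⊗ₜ[k] p) = (TensorProduct.assoc k B P C).symm (b ⊗ₜ[k] ΔP p) := rfl

lemma smul_assoc_symm (b c : B) (w : P ⊗[k] C) :
    b • (TensorProduct.assoc k B P C).symm (c ⊗ₜ[k] w)
      = (TensorProduct.assoc k B P C).symm ((b * c) ⊗ₜ[k] w) := by
  induction w using TensorProduct.induction_on with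
  | zero => simp
  | tmul p c' => simp [assoc_symm_tmul, TensorProduct.smul_tmul', smul_eq_mul]
  | add x y hx hy => simp [tmul_add, map_add, smul_add, hx, hy]

lemma rhoM_smul (b : B) (x : B ⊗[k] P) : rhoM P ΔP (b • x) = b • rhoM P ΔP x := by
  induction x using TensorProduct.induction_on with
  | zero => simp
  | tmul c p =>
      rw [TensorProduct.smul_tmul', smul_eq_mul, rhoM_tmul, rhoM_tmul, smul_assoc_symm]
  | add x y hx hy => simp only [smul_add, map_add, hx, hy]

lemma counit_lemma (b : B) (w : P ⊗[k] C) :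
    (TensorProduct.rid k (B ⊗[k] P))
      ((lTensor (B ⊗[k] P) (Coalgebra.counit : C →ₗ[k] k))
        ((TensorProduct.assoc k B P C).symm (b ⊗ₜ[k] w)))
      = b ⊗ₜ[k] ((TensorProduct.rid k P) ((lTensor P (Coalgebra.counit : C →ₗ[k] k)) w)) := by
  induction w using TensorProduct.induction_on with
  | zero => simp
  | tmul p c => simp [assoc_symm_tmul, tmul_smul]
  | add x y hx hy => simp only [tmul_add, map_add, hx, hy]

/-- Auxiliary map `Ψ b`. -/
def psiMap (b : B) : (P ⊗[k] C) ⊗[k] C →ₗ[k] ((B ⊗[k] P) ⊗[k] C) ⊗[k] C :=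
  rTensor C ((TensorProduct.assoc k B P C).symm.toLinearMap ∘ₗ TensorProduct.mk k B (P ⊗[k] C) b)

lemma lemA (b : B) (w : P ⊗[k] C) :
    rTensor C (rhoM P ΔP) ((TensorProduct.assoc k B P C).symm (b ⊗ₜ[k] w))
      = psiMap P b (rTensor C ΔP w) := by
  induction w using TensorProduct.induction_on with
  | zero => simp
  | tmul p c => simp [psiMap, assoc_symm_tmul, rTensor_tmul]
  | add x y hx hy => simp only [tmul_add, map_add, hx, hy]

lemma lemB' (b : B) (p : P) (u : C ⊗[k] C) :
    psiMap P b ((TensorProduct.assoc k P C C).symm (p ⊗ₜ[k] u))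
      = (TensorProduct.assoc k (B ⊗[k] P) C C).symm ((b ⊗ₜ[k] p) ⊗ₜ[k] u) := by
  induction u using TensorProduct.induction_on with
  | zero => simp
  | tmul c1 c2 => simp [psiMap, assoc_symm_tmul, rTensor_tmul]
  | add x y hx hy => simp only [tmul_add, map_add, hx, hy]

lemma lemB (b : B) (w : P ⊗[k] C) :
    psiMap P b ((TensorProduct.assoc k P C C).symm
        ((lTensor P (Coalgebra.comul : C →ₗ[k] C ⊗[k] C)) w))
      = (TensorProduct.assoc k (B ⊗[k] P) C C).symm
          ((lTensor (B ⊗[k] P) (Coalgebra.comul : C →ₗ[k] C ⊗[k] C))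
            ((TensorProduct.assoc k B P C).symm (b ⊗ₜ[k] w))) := by
  induction w using TensorProduct.induction_on with
  | zero => simp
  | tmul p c => simp [assoc_symm_tmul, lTensor_tmul, lemB']
  | add x y hx hy => simp only [tmul_add, map_add, hx, hy]

lemma mu_assoc_symm (b : B) (w : P ⊗[k] C) :
    rTensor C (muMap P) ((TensorProduct.assoc k B P C).symm (b ⊗ₜ[k] w)) = b • w := by
  induction w using TensorProduct.induction_on with
  | zero => simp
  | tmul p c => simp [assoc_symm_tmul, rTensor_tmul, TensorProduct.smul_tmul']
  | add x y hx hy => simp only [tmul_add, map_add, smul_add, hx, hy]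

lemma one_assoc_symm (w : P ⊗[k] C) :
    (TensorProduct.assoc k B P C).symm ((1 : B) ⊗ₜ[k] w)
      = rTensor C (TensorProduct.mk k B P 1) w := by
  induction w using TensorProduct.induction_on with
  | zero => simp
  | tmul p c => simp [assoc_symm_tmul, rTensor_tmul]
  | add x y hx hy => simp only [tmul_add, map_add, hx, hy]

variable {M N : Type u}
  [AddCommGroup M] [Module k M] [Module B M] [IsScalarTower k B M] [SMulCommClass k B M]
  [AddCommGroup N] [Module k N] [Module B N] [IsScalarTower k B N] [SMulCommClass k B N]

/-- The lifting `B ⊗ P → M`, `b ⊗ p ↦ b • i (f p)`. -/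
def hMap (f : P →ₗ[k] N) (i : N →ₗ[k] M) : B ⊗[k] P →ₗ[k] M :=
  muMap M ∘ₗ lTensor B (i ∘ₗ f)

@[simp] lemma hMap_tmul (f : P →ₗ[k] N) (i : N →ₗ[k] M) (b : B) (p : P) :
    hMap P f i (b ⊗ₜ[k] p) = b • i (f p) := rfl

lemma hMap_smul (f : P →ₗ[k] N) (i : N →ₗ[k] M) (b : B) (x : B ⊗[k] P) :
    hMap P f i (b • x) = b • hMap P f i x := by
  induction x using TensorProduct.induction_on with
  | zero => simp
  | tmul c p =>
      rw [TensorProduct.smul_tmul', smul_eq_mul, hMap_tmul, hMap_tmul, mul_smul]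
  | add x y hx hy => simp only [smul_add, map_add, hx, hy]

lemma hMap_assoc_symm (f : P →ₗ[k] N) (i : N →ₗ[k] M) (b : B) (w : P ⊗[k] C) :
    rTensor C (hMap P f i) ((TensorProduct.assoc k B P C).symm (b ⊗ₜ[k] w))
      = b • rTensor C (i ∘ₗ f) w := by
  induction w using TensorProduct.induction_on with
  | zero => simp
  | tmul p c =>
      simp [assoc_symm_tmul, rTensor_tmul, TensorProduct.smul_tmul']
  | add x y hx hy => simp only [tmul_add, map_add, smul_add, hx, hy]

lemma hMap_colinear (ρM : M →ₗ[k] M ⊗[k] C) (ρN : N →ₗ[k] N ⊗[k] C)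
    (hMB : ∀ (b : B) (m : M), ρM (b • m) = b • ρM m)
    (f : P →ₗ[k] N) (i : N →ₗ[k] M)
    (hfcol : IsColinear (k := k) (C := C) ΔP ρN f)
    (hicol : IsColinear (k := k) (C := C) ρN ρM i)
    (x : B ⊗[k] P) :
    ρM (hMap P f i x) = rTensor C (hMap P f i) (rhoM P ΔP x) := by
  induction x using TensorProduct.induction_on with
  | zero => simp
  | tmul b p =>
      rw [hMap_tmul, hMB, hicol, hfcol, rhoM_tmul, hMap_assoc_symm,
        ← rTensor_comp_apply]
  | add x y hx hy => simp only [map_add, hx, hy]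

lemma hMap_pi (π : M →ₗ[k] N) (f : P →ₗ[k] N) (i : N →ₗ[k] M)
    (hπB : ∀ (b : B) (m : M), π (b • m) = b • π m)
    (hfB : ∀ (b : B) (p : P), f (b • p) = b • f p)
    (hπi : ∀ n : N, π (i n) = n)
    (x : B ⊗[k] P) :
    π (hMap P f i x) = f (muMap P x) := by
  induction x using TensorProduct.induction_on with
  | zero => simp
  | tmul b p => rw [hMap_tmul, hπB, hπi, muMap_tmul, hfB]
  | add x y hx hy => simp only [map_add, hx, hy]

end Aux

theorem equivariantly_projective_iff_section
    (P : Type u) [AddCommGroup P] [Module k P] [Module B P]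
    [IsScalarTower k B P] [SMulCommClass k B P]
    (ΔP : P →ₗ[k] P ⊗[k] C)
    (hco : IsCoactionOn (k := k) (C := C) P ΔP)
    (hBlin : ∀ (b : B) (p : P), ΔP (b • p) = b • ΔP p) :
    -- C-equivariant projectivity of P as a left B-module:
    (∀ (M N : Type u)
        (_ : AddCommGroup M) (_ : Module k M) (_ : Module B M)
        (_ : IsScalarTower k B M) (_ : SMulCommClass k B M)
        (_ : AddCommGroup N) (_ : Module k N) (_ : Module B N)
        (_ : IsScalarTower k B N) (_ : SMulCommClass k B N)
        (ρM : M →ₗ[k] M ⊗[k] C) (ρN : N →ₗ[k] N ⊗[k] C),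
        IsCoactionOn (k := k) (C := C) M ρM →
        IsCoactionOn (k := k) (C := C) N ρN →
        (∀ (b : B) (m : M), ρM (b • m) = b • ρM m) →
        (∀ (b : B) (n : N), ρN (b • n) = b • ρN n) →
        ∀ (π : M →ₗ[k] N) (f : P →ₗ[k] N) (i : N →ₗ[k] M),
          (∀ (b : B) (m : M), π (b • m) = b • π m) →
          IsColinear (k := k) (C := C) ρM ρN π →
          (∀ (b : B) (p : P), f (b • p) = b • f p) →
          IsColinear (k := k) (C := C) ΔP ρN f →
          IsColinear (k := k) (C := C) ρN ρM i →
          (∀ n : N, π (i n) = n) →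
          ∃ g : P →ₗ[k] M,
            (∀ (b : B) (p : P), g (b • p) = b • g p) ∧
            IsColinear (k := k) (C := C) ΔP ρM g ∧
            ∀ p : P, π (g p) = f p)
    ↔
    -- existence of a B-linear C-colinear section of the multiplication map:
    (∃ s : P →ₗ[k] B ⊗[k] P,
        (∀ (b : B) (p : P), s (b • p) = b • s p) ∧
        IsColinear (k := k) (C := C) ΔP
          ((TensorProduct.assoc k B P C).symm.toLinearMap ∘ₗ (lTensor B ΔP)) s ∧
        ∀ p : P,
          (TensorProduct.lift
            (LinearMap.mk₂ k (fun (b : B) (p : P) => b • p)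
              (fun _ _ _ => add_smul _ _ _)
              (fun _ _ _ => smul_assoc _ _ _)
              (fun _ _ _ => smul_add _ _ _)
              (fun c b p => (smul_comm c b p).symm))) (s p) = p) := by
  constructor
  · -- projectivity → section
    intro hproj
    have hcoM : IsCoactionOn (k := k) (C := C) (B ⊗[k] P) (rhoM P ΔP) := by
      constructor
      · intro x
        induction x using TensorProduct.induction_on with
        | zero => simp
        | tmul b p => rw [rhoM_tmul, counit_lemma, hco.1]
        | add x y hx hy => simp only [map_add, hx, hy]
      · intro x
        induction x using TensorProduct.induction_on with
        | zero => simp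
        | tmul b p => rw [rhoM_tmul, lemA, hco.2 p, lemB]
        | add x y hx hy => simp only [map_add, hx, hy]
    have hπB : ∀ (b : B) (x : B ⊗[k] P), muMap P (b • x) = b • muMap P x := by
      intro b x
      induction x using TensorProduct.induction_on with
      | zero => simp
      | tmul c p =>
          rw [TensorProduct.smul_tmul', smul_eq_mul, muMap_tmul, muMap_tmul, mul_smul]
      | add x y hx hy => simp only [smul_add, map_add, hx, hy]
    have hπcol : IsColinear (k := k) (C := C) (rhoM (B := B) P ΔP) ΔP (muMap (B := B) P) := by
      intro x
      induction x using TensorProduct.induction_on with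
      | zero => simp
      | tmul b p => rw [muMap_tmul, hBlin, rhoM_tmul, mu_assoc_symm]
      | add x y hx hy => simp only [map_add, hx, hy]
    have hicol : IsColinear (k := k) (C := C) ΔP (rhoM (B := B) P ΔP)
        (TensorProduct.mk k B P 1) := by
      intro p
      simp only [TensorProduct.mk_apply, rhoM_tmul, one_assoc_symm]
    have hfB' : ∀ (b : B) (p : P), (LinearMap.id : P →ₗ[k] P) (b • p)
        = b • (LinearMap.id : P →ₗ[k] P) p := fun _ _ => rfl
    have hfcol' : IsColinear (k := k) (C := C) ΔP ΔP (LinearMap.id : P →ₗ[k] P) := by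
      intro p; simp
    have hsec' : ∀ p : P, muMap (B := B) P ((TensorProduct.mk k B P 1) p)
        = (LinearMap.id : P →ₗ[k] P) p := by
      intro p; simp
    obtain ⟨g, hg1, hg2, hg3⟩ :=
      hproj (B ⊗[k] P) P inferInstance inferInstance inferInstance inferInstance
        inferInstance inferInstance inferInstance inferInstance inferInstance inferInstance
        (rhoM P ΔP) ΔP hcoM hco (rhoM_smul P ΔP) hBlin
        (muMap P) LinearMap.id (TensorProduct.mk k B P 1)
        hπB hπcol hfB' hfcol' hicol hsec'
    exact ⟨g, hg1, hg2, fun p => hg3 p⟩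
  · -- section → projectivity
    rintro ⟨s, hsB, hscol, hsmu⟩
    intro M N _ _ _ _ _ _ _ _ _ _ ρM ρN hcoM hcoN hMB hNB π f i hπB hπcol hfB hfcol hicol hπi
    refine ⟨hMap P f i ∘ₗ s, ?_, ?_, ?_⟩
    · intro b p
      rw [comp_apply, comp_apply, hsB, hMap_smul]
    · intro p
      rw [comp_apply, hMap_colinear P ΔP ρM ρN hMB f i hfcol hicol (s p)]
      have hs : rhoM P ΔP (s p) = rTensor C s (ΔP p) := hscol p
      rw [hs, ← rTensor_comp_apply]
    · intro p
      rw [comp_apply, hMap_pi P π f i hπB hfB hπi]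
      have hm : muMap P (s p) = p := hsmu p
      rw [hm]

end CGal
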